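/- Let Ā be an ℕ-graded σ-twisted K-algebra with bounded Hilbert function, and let x ∈ Ā_d be a regular homogeneous element of degree d > 0. Then there exists N such that for all n ≥ N, left multiplication by x gives a bijection Ā_n → Ā_{n+d}; consequently Ā is a finitely generated left module over its subalgebra K[x;σ^d] (the subalgebra generated by K and x). -/

import Mathlib

/-!
Left multiplication by `x` is injective and, by the twisting relation, `σ^d`-semilinear, so
it maps `K`-submodules strictly monotonically and sends `Ā_n` into `Ā_{n+d}`. Hence the
lengths `ℓ(n)` of the `Ā_n` satisfy `ℓ(n) ≤ ℓ(n+d)`, strictly unless `x Ā_n = Ā_{n+d}`.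
Since `ℓ` is bounded, the window sums `ℓ(n) + ⋯ + ℓ(n+d-1)` increase and stabilise, which
forces `x Ā_n = Ā_{n+d}` for all large `n`. Each `Ā_n` has finite length, so is finitely
generated over `K`, and generators of `Ā_0, …, Ā_{N+d-1}` then generate `Ā` over `K[x;σ^d]`.
-/

open Order

theorem Nat.exists_forall_ge_eq_of_monotone {f : ℕ → ℕ} {B : ℕ} (hf : Monotone f)
    (hB : ∀ n, f n ≤ B) : ∃ N, ∀ n ≥ N, f n = f N := by
  have hbdd : BddAbove (Set.range f) := ⟨B, Set.forall_mem_range.mpr hB⟩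
  obtain ⟨N, hN⟩ := Nat.sSup_mem (Set.range_nonempty f) hbdd
  exact ⟨N, fun n hn => le_antisymm (hN ▸ le_csSup hbdd ⟨n, rfl⟩) (hf hn)⟩

theorem Nat.exists_forall_ge_add_eq {f : ℕ → ℕ} {B d : ℕ} (hB : ∀ n, f n ≤ B)
    (hf : ∀ n, f n ≤ f (n + d)) : ∃ N, ∀ n ≥ N, f (n + d) = f n := by
  set Φ : ℕ → ℕ := fun n => ∑ i ∈ Finset.range d, f (n + i) with hΦ
  have hstep : ∀ n, Φ (n + 1) + f n = Φ n + f (n + d) := fun n => by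
    rw [hΦ, ← Finset.sum_range_succ (fun i => f (n + i)), Finset.sum_range_succ']
    simp only [add_zero, add_assoc, add_comm 1]
  have hΦB : ∀ n, Φ n ≤ d * B := fun n => by
    simpa using Finset.sum_le_sum (s := Finset.range d) fun i _ => hB (n + i)
  obtain ⟨N, hN⟩ := exists_forall_ge_eq_of_monotone
    (monotone_nat_of_le_succ fun n => by linarith [hstep n, hf n]) hΦB
  exact ⟨N, fun n hn => by linarith [hstep n, hN n hn, hN (n + 1) (by omega)]⟩

theorem Order.exists_forall_ge_apply_eq_of_height_le {α : Type*} [PartialOrder α] {φ : α → α}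
    (hφ : StrictMono φ) {a : ℕ → α} {B d : ℕ} (hB : ∀ n, height (a n) ≤ B)
    (ha : ∀ n, φ (a n) ≤ a (n + d)) : ∃ N, ∀ n ≥ N, φ (a n) = a (n + d) := by
  have hfin : ∀ n, height (a n) < ⊤ := fun n => (hB n).trans_lt (ENat.natCast_lt_top B)
  choose h hh using fun n => ENat.ne_top_iff_exists.mp (hfin n).ne
  have hle : ∀ n, height (a n) ≤ height (φ (a n)) := fun n =>
    height_le_height_apply_of_strictMono φ hφ (a n)
  obtain ⟨N, hN⟩ := Nat.exists_forall_ge_add_eq (f := h)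
    (fun n => by exact_mod_cast (hh n).trans_le (hB n))
    (fun n => by
      exact_mod_cast (hh n).trans_le <| (hle n).trans <| (height_mono (ha n)).trans (hh _).ge)
  refine ⟨N, fun n hn => (ha n).eq_of_not_lt fun hlt => ?_⟩
  have hlt' : height (a n) < height (a (n + d)) :=
    (hle n).trans_lt (height_strictMono hlt ((height_mono hlt.le).trans_lt (hfin _)))
  rw [← hh, ← hh, hN n hn] at hlt'
  exact lt_irrefl _ hlt'

theorem Order.height_le_of_forall_le {α : Type*} [Preorder α] {a : α} {B : ℕ}
    (h : ∀ p : LTSeries α, (∀ i, p i ≤ a) → p.length ≤ B) : height a ≤ B :=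
  height_le_iff.mpr fun p hp => mod_cast h p fun i => (p.monotone (Fin.le_last i)).trans hp

theorem Submodule.fg_of_height_ne_top {R M : Type*} [Ring R] [AddCommGroup M] [Module R M]
    {N : Submodule R M} (h : height N ≠ ⊤) : N.FG := by
  have : IsFiniteLength R N := Module.length_ne_top_iff.mp (Module.length_submodule (N := N) ▸ h)
  have := (isFiniteLength_iff_isNoetherian_isArtinian.mp this).1
  exact N.fg_top.mp (IsNoetherian.noetherian ⊤)

section SpanOverSubalgebra

variable {k A : Type*} [CommSemiring k] [Semiring A] [Algebra k A] {S : Subalgebra k A}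

theorem Subalgebra.mem_closure_mul_of_mem_span {s : Set A} {a : A}
    (h : a ∈ Submodule.span S s) :
    a ∈ AddSubmonoid.closure {y | ∃ b ∈ S, ∃ v ∈ s, y = b * v} := by
  rw [← Submodule.mem_toAddSubmonoid, Submodule.span_eq_closure] at h
  convert h using 2
  ext y
  simp [Set.mem_smul, Subalgebra.smul_def, eq_comm]

theorem Subalgebra.span_subset_span_of_smul_eq_mul {K : Type*} [Semiring K] [Module K A]
    (hK : ∀ γ : K, ∃ b ∈ S, ∀ a : A, γ • a = b * a) {t s : Set A} (hts : t ⊆ s) :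
    (Submodule.span K t : Set A) ⊆ Submodule.span S s := by
  intro a ha
  induction ha using Submodule.span_induction with
  | mem v hv => exact Submodule.subset_span (hts hv)
  | zero => exact zero_mem _
  | add _ _ _ _ hy hz => exact add_mem hy hz
  | smul γ z _ hz =>
    obtain ⟨b, hb, hγ⟩ := hK γ
    rw [hγ]
    exact Submodule.smul_mem _ (⟨b, hb⟩ : S) hz

theorem GradedRing.span_eq_top_of_surjOn_mul_left (𝒜 : ℕ → Submodule k A) [GradedRing 𝒜]
    {x : A} (hxS : x ∈ S) {d N : ℕ} (hd : 0 < d)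
    (hsurj : ∀ n ≥ N, Set.SurjOn (x * ·) (𝒜 n) (𝒜 (n + d)))
    {s : Set A} (hs : ∀ n < N + d, (𝒜 n : Set A) ⊆ Submodule.span S s) :
    Submodule.span S s = ⊤ := by
  have hdeg : ∀ n, (𝒜 n : Set A) ⊆ Submodule.span S s := by
    intro n
    induction n using Nat.strong_induction_on with
    | _ n ih =>
      by_cases hn : n < N + d
      · exact hs n hn
      · intro b hb
        obtain ⟨a, ha, rfl⟩ := hsurj (n - d) (by omega) (by rwa [Nat.sub_add_cancel (by omega)])
        exact Submodule.smul_mem _ (⟨x, hxS⟩ : S) (ih (n - d) (by omega) ha)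
  exact eq_top_iff.mpr fun a _ => DirectSum.Decomposition.inductionOn 𝒜 (zero_mem _)
    (fun m => hdeg _ m.2) (fun _ _ => add_mem) a

end SpanOverSubalgebra

theorem mul_left_bijective_of_boundedHilbert_and_finitely_generated
    (k : Type) [Field k]
    (K : Type) [CommRing K] [Algebra k K]
    (σ : K ≃ₐ[k] K)
    (Abar : Type) [Ring Abar] [Algebra k Abar]
    (𝒜 : ℕ → Submodule k Abar) [GradedRing 𝒜]
    (ι : K →ₐ[k] Abar)
    (htwist : ∀ (i : ℕ), ∀ a ∈ 𝒜 i, ∀ γ : K, a * ι γ = ι ((σ ^ i) γ) * a)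
    -- the left `K`-module structure on `Ā` given by `γ • a = ι(γ)·a`,
    -- for which the graded pieces are `K`-submodules
    [Module K Abar] (hsmul : ∀ (γ : K) (a : Abar), γ • a = ι γ * a)
    (𝒜K : ℕ → Submodule K Abar) (h𝒜K : ∀ n, (𝒜K n : Set Abar) = (𝒜 n : Set Abar))
    -- bounded Hilbert function: `length_K (Ā_n) ≤ B` for all `n`
    (B : ℕ)
    (hHilb : ∀ (n : ℕ)
      (c : RelSeries {(a, b) : Submodule K Abar × Submodule K Abar | a < b}),
      (∀ i, c.toFun i ≤ 𝒜K n) → c.length ≤ B)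
    (d : ℕ) (hd : 0 < d) (x : Abar) (hx : x ∈ 𝒜 d)
    (hxreg_l : ∀ b : Abar, x * b = 0 → b = 0) :
    -- for `n` large, left multiplication by `x` is a bijection `Ā_n → Ā_{n+d}`
    (∃ N : ℕ, ∀ n ≥ N,
      (∀ a ∈ 𝒜 n, x * a ∈ 𝒜 (n + d)) ∧
      (∀ a ∈ 𝒜 n, ∀ a' ∈ 𝒜 n, x * a = x * a' → a = a') ∧
      (∀ b ∈ 𝒜 (n + d), ∃ a ∈ 𝒜 n, b = x * a)) ∧
    -- `Ā` is a finitely generated left module over the subalgebra generated by `K` and `x`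
    (∃ s : Finset Abar, ∀ a : Abar,
      a ∈ AddSubmonoid.closure
        {y : Abar | ∃ b ∈ Algebra.adjoin k (Set.range ⇑ι ∪ {x}), ∃ v ∈ s, y = b * v}) := by
  have hmem : ∀ n a, a ∈ 𝒜K n ↔ a ∈ 𝒜 n := fun n => Set.ext_iff.mp (h𝒜K n)
  have hxmul : ∀ n, ∀ a ∈ 𝒜 n, x * a ∈ 𝒜 (n + d) := fun n a ha =>
    add_comm d n ▸ SetLike.mul_mem_graded hx ha
  have hxinj : Function.Injective (x * ·) := fun a a' h =>
    sub_eq_zero.mp (hxreg_l _ (by rw [mul_sub]; exact sub_eq_zero.mpr h))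
  let mulX : Abar →ₛₗ[(((σ ^ d : K ≃ₐ[k] K) : K ≃+* K) : K →+* K)] Abar :=
    { toFun := (x * ·), map_add' := mul_add x
      map_smul' := fun γ a => by simp only [hsmul, ← mul_assoc, htwist d x hx]; rfl }
  have hheight : ∀ n, height (𝒜K n) ≤ B := fun n => height_le_of_forall_le (hHilb n)
  obtain ⟨N, hN⟩ := exists_forall_ge_apply_eq_of_height_le
    (Submodule.map_strictMono_of_injective (f := mulX) hxinj) hheight
    fun n => Submodule.map_le_iff_le_comap.mpr fun a ha =>
      (hmem _ _).mpr (hxmul n a ((hmem n a).mp ha))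
  have hsurj : ∀ n ≥ N, Set.SurjOn (x * ·) (𝒜 n) (𝒜 (n + d)) := fun n hn b hb => by
    obtain ⟨a, ha, rfl⟩ := (hN n hn).ge ((hmem _ _).mpr hb)
    exact ⟨a, (hmem n a).mp ha, rfl⟩
  refine ⟨⟨N, fun n hn => ⟨hxmul n, fun a _ a' _ h => hxinj h, fun b hb =>
    (hsurj n hn hb).imp fun _ ⟨ha, hab⟩ => ⟨ha, hab.symm⟩⟩⟩, ?_⟩
  classical
  choose t ht using fun n =>
    Submodule.fg_of_height_ne_top ((hheight n).trans_lt (ENat.natCast_lt_top B)).ne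
  refine ⟨(Finset.range (N + d)).biUnion t, fun a => Subalgebra.mem_closure_mul_of_mem_span ?_⟩
  refine (GradedRing.span_eq_top_of_surjOn_mul_left 𝒜 (Algebra.subset_adjoin (by simp)) hd hsurj
    fun n hn => ?_).ge Submodule.mem_top
  rw [← h𝒜K, ← ht n]
  refine Subalgebra.span_subset_span_of_smul_eq_mul
    (fun γ => ⟨ι γ, Algebra.subset_adjoin (Or.inl ⟨γ, rfl⟩), hsmul γ⟩) ?_
  exact_mod_cast Finset.subset_biUnion_of_mem t (Finset.mem_range.mpr hn)
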